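/- Up to isomorphism there are exactly 4 nilpotent Jordan algebras of dimension 3 over an algebraically closed field K of characteristic ≠ 2: (1) the abelian algebra; (2) a² = b (direct sum with trivial 1-dim algebra); (3) a² = c, b² = c; (4) a² = b, a∘b = c. -/

import Mathlib

/-- A map `f : M → M → N` is `K`-bilinear. -/
def IsBilin (K : Type*) [Field K] {M N : Type*} [AddCommGroup M] [Module K M]
    [AddCommGroup N] [Module K N] (f : M → M → N) : Prop :=
  (∀ x x' y, f (x + x') y = f x y + f x' y) ∧
  (∀ x y y', f x (y + y') = f x y + f x y') ∧
  (∀ (a : K) (x y), f (a • x) y = a • f x y) ∧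
  (∀ (a : K) (x y), f x (a • y) = a • f x y)

/-- `mul` makes `M` into a Jordan algebra over `K`: a commutative bilinear product
satisfying the Jordan identity `x² ∘ (x ∘ y) = x ∘ (x² ∘ y)`. -/
def IsJordanAlg (K : Type*) [Field K] {M : Type*} [AddCommGroup M] [Module K M]
    (mul : M → M → M) : Prop :=
  IsBilin K mul ∧ (∀ x y, mul x y = mul y x) ∧
  ∀ x y, mul (mul x x) (mul x y) = mul x (mul (mul x x) y)

/-- A Jordan 2-cocycle from `(M, mul)` to `V`. -/
def IsJCocycle (K : Type*) [Field K] {M V : Type*} [AddCommGroup M] [Module K M]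
    [AddCommGroup V] [Module K V] (mul : M → M → M) (θ : M → M → V) : Prop :=
  IsBilin K θ ∧ (∀ x y, θ x y = θ y x) ∧
  ∀ x y, θ (mul x x) (mul x y) = θ x (mul (mul x x) y)

/-- Lower central series: `lcs K mul 0 = c¹(J) = J`, `lcs K mul (n+1) = c^{n+2}(J) = c^{n+1}(J) ∘ J`. -/
def lcs (K : Type*) [Field K] {M : Type*} [AddCommGroup M] [Module K M]
    (mul : M → M → M) : ℕ → Submodule K M
  | 0 => ⊤
  | n + 1 => Submodule.span K {z | ∃ x, x ∈ lcs K mul n ∧ ∃ y, z = mul x y}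

/-- A Jordan algebra is nilpotent if its lower central series reaches zero. -/
def IsNilpotentAlg (K : Type*) [Field K] {M : Type*} [AddCommGroup M] [Module K M]
    (mul : M → M → M) : Prop :=
  ∃ n, lcs K mul n = ⊥

/-- Isomorphism of (Jordan) algebras. -/
def JIso (K : Type*) [Field K] {M N : Type*} [AddCommGroup M] [Module K M]
    [AddCommGroup N] [Module K N] (mul1 : M → M → M) (mul2 : N → N → N) : Prop :=
  ∃ e : M ≃ₗ[K] N, ∀ x y, e (mul1 x y) = mul2 (e x) (e y)

/-- Central extension product on `M × V` induced by `θ`. -/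
def extMul (K : Type*) [Field K] {M V : Type*} [AddCommGroup M] [Module K M]
    [AddCommGroup V] [Module K V] (mul : M → M → M) (θ : M → M → V) :
    M × V → M × V → M × V :=
  fun p q => (mul p.1 q.1, θ p.1 q.1)

/-- 3-dim algebra, all products zero. -/
def m31 (K : Type*) [Field K] : (Fin 3 → K) → (Fin 3 → K) → (Fin 3 → K) := fun _ _ => 0

/-- 3-dim algebra, `a² = b`. -/
def m32 (K : Type*) [Field K] : (Fin 3 → K) → (Fin 3 → K) → (Fin 3 → K) :=
  fun x y => ![0, x 0 * y 0, 0]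

/-- 3-dim algebra, `a² = c`, `b² = c`. -/
def m33 (K : Type*) [Field K] : (Fin 3 → K) → (Fin 3 → K) → (Fin 3 → K) :=
  fun x y => ![0, 0, x 0 * y 0 + x 1 * y 1]

/-- 3-dim algebra, `a² = b`, `a∘b = c`. -/
def m34 (K : Type*) [Field K] : (Fin 3 → K) → (Fin 3 → K) → (Fin 3 → K) :=
  fun x y => ![0, x 0 * y 0, x 0 * y 1 + x 1 * y 0]

/-!
In a nilpotent algebra the lower central series strictly decreases until it reaches `0`, so in
dimension 3 the square `J² = c²(J)` has dimension 0, 1 or 2.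

If `J² = K c` is a line, then `c ∘ J ⊆ J³ = 0` and `x ∘ y = θ(x, y) c` for a symmetric bilinear
form `θ` having `c` in its radical. Over an algebraically closed field of characteristic `≠ 2` a
nonzero symmetric form has a vector `a` with `θ(a, a) = 1`; on `a^⊥ ∋ c` the form either vanishes,
so that `a^⊥` is the radical and `J ≅ m32`, or it has a second unit vector `b`, and `J ≅ m33`.

If `dim J² = 2`, any `a ∉ J²` generates: `J² = K a² + J³` and `J³ = K (a ∘ a²)`, and the Jordan
identity gives `a² ∘ a² = a ∘ (a² ∘ a) ∈ J⁴ = 0`, so `a, a², a ∘ a²` is a basis with the table of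
`m34`.

The models are separated by the first vanishing term of their lower central series, except `m32`
and `m33`: only in `m32` does the annihilator stick out of `J²`.
-/

open Module Submodule

section General

variable {K : Type*} [Field K] {M N : Type*} [AddCommGroup M] [Module K M]
  [AddCommGroup N] [Module K N]

noncomputable def IsBilin.toLinearMap₂ {f : M → M → N} (h : IsBilin K f) :
    M →ₗ[K] M →ₗ[K] N :=
  LinearMap.mk₂ K f h.1 h.2.2.1 h.2.1 h.2.2.2

@[simp] lemma IsBilin.toLinearMap₂_apply {f : M → M → N} (h : IsBilin K f) (x y : M) :
    h.toLinearMap₂ x y = f x y := rfl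

section LowerCentralSeries

variable {mul : M → M → M}

lemma mul_mem_lcs_succ {n : ℕ} {x : M} (hx : x ∈ lcs K mul n) (y : M) :
    mul x y ∈ lcs K mul (n + 1) :=
  subset_span ⟨x, hx, y, rfl⟩

lemma lcs_succ_le_of {p : Submodule K M} {n : ℕ} (h : ∀ x ∈ lcs K mul n, ∀ y, mul x y ∈ p) :
    lcs K mul (n + 1) ≤ p :=
  span_le.2 <| by rintro z ⟨x, hx, y, rfl⟩; exact h x hx y

lemma lcs_succ_le (n : ℕ) : lcs K mul (n + 1) ≤ lcs K mul n := by
  induction n with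
  | zero => exact le_top
  | succ n ih => exact lcs_succ_le_of fun x hx y => mul_mem_lcs_succ (ih hx) y

lemma lcs_succ_eq_bot_iff {n : ℕ} :
    lcs K mul (n + 1) = ⊥ ↔ ∀ x ∈ lcs K mul n, ∀ y, mul x y = 0 := by
  refine ⟨fun h x hx y => ?_, fun h => eq_bot_iff.2 <| lcs_succ_le_of fun x hx y => ?_⟩
  · simpa [h] using mul_mem_lcs_succ hx y
  · simp [h x hx y]

lemma lcs_add_eq_of_succ_eq {n : ℕ} (h : lcs K mul (n + 1) = lcs K mul n) (k : ℕ) :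
    lcs K mul (n + k) = lcs K mul n := by
  induction k with
  | zero => rfl
  | succ k ih =>
    rw [← add_assoc, ← h]
    show span K _ = span K _
    rw [ih]

lemma lcs_succ_lt (hN : IsNilpotentAlg K mul) {n : ℕ} (h : lcs K mul n ≠ ⊥) :
    lcs K mul (n + 1) < lcs K mul n := by
  refine (lcs_succ_le n).lt_of_ne fun heq => ?_
  obtain ⟨m, hm⟩ := hN
  have hle : n ≤ m := by
    by_contra! hlt
    exact h <| eq_bot_iff.2 <| hm ▸ (antitone_nat_of_succ_le lcs_succ_le) hlt.le
  obtain ⟨k, rfl⟩ := Nat.exists_eq_add_of_le hle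
  exact h (lcs_add_eq_of_succ_eq heq k ▸ hm)

lemma finrank_lcs_le [FiniteDimensional K M] (hN : IsNilpotentAlg K mul) (n : ℕ) :
    finrank K (lcs K mul n) ≤ finrank K M - n := by
  induction n with
  | zero => exact Submodule.finrank_le _
  | succ n ih =>
    by_cases h : lcs K mul n = ⊥
    · have : lcs K mul (n + 1) = ⊥ := eq_bot_iff.2 (h ▸ lcs_succ_le n)
      rw [this, finrank_bot]
      exact Nat.zero_le _
    · have := finrank_lt_finrank_of_lt (lcs_succ_lt hN h)
      omega

end LowerCentralSeries

end General

section Isomorphism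

variable {K : Type*} [Field K] {M N : Type*} [AddCommGroup M] [Module K M]
  [AddCommGroup N] [Module K N] {mul₁ : M → M → M} {mul₂ : N → N → N}

lemma map_lcs_of_map_mul (e : M ≃ₗ[K] N) (he : ∀ x y, e (mul₁ x y) = mul₂ (e x) (e y))
    (n : ℕ) : (lcs K mul₁ n).map (e : M →ₗ[K] N) = lcs K mul₂ n := by
  induction n with
  | zero => exact (Submodule.map_top _).trans (LinearEquiv.range e)
  | succ n ih =>
    show map _ (span K _) = span K _
    rw [map_span]
    congr 1
    ext z
    constructor
    · rintro ⟨_, ⟨x, hx, y, rfl⟩, rfl⟩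
      exact ⟨e x, ih ▸ mem_map_of_mem hx, e y, he x y⟩
    · rintro ⟨x, hx, y, rfl⟩
      rw [← ih, mem_map_equiv] at hx
      exact ⟨mul₁ (e.symm x) (e.symm y), ⟨e.symm x, hx, e.symm y, rfl⟩, by simp [he]⟩

lemma JIso.lcs_eq_bot_iff (h : JIso K mul₁ mul₂) (n : ℕ) :
    lcs K mul₁ n = ⊥ ↔ lcs K mul₂ n = ⊥ := by
  obtain ⟨e, he⟩ := h
  rw [← map_lcs_of_map_mul e he n, Submodule.map_eq_bot_iff]

lemma not_jIso_of_lcs_eq_bot {n : ℕ} (h₁ : lcs K mul₁ n = ⊥) (h₂ : lcs K mul₂ n ≠ ⊥) :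
    ¬ JIso K mul₁ mul₂ :=
  fun h => h₂ ((h.lcs_eq_bot_iff n).1 h₁)

lemma not_jIso_of_annihilator_notMem_lcs_one
    (h₁ : ∃ x, (∀ y, mul₁ x y = 0) ∧ x ∉ lcs K mul₁ 1)
    (h₂ : ∀ z, (∀ y, mul₂ z y = 0) → z ∈ lcs K mul₂ 1) : ¬ JIso K mul₁ mul₂ := by
  rintro ⟨e, he⟩
  obtain ⟨x, hx, hx₁⟩ := h₁
  have hex : e x ∈ lcs K mul₂ 1 :=
    h₂ (e x) fun y => by rw [← e.apply_symm_apply y, ← he, hx, map_zero]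
  rw [← map_lcs_of_map_mul e he, mem_map_equiv, e.symm_apply_apply] at hex
  exact hx₁ hex

lemma jIso_of_linearIndependent {ι : Type*} [Fintype ι] [DecidableEq ι] [Nonempty ι]
    {mul : M → M → M} {m : (ι → K) → (ι → K) → (ι → K)} (hmul : IsBilin K mul)
    (hm : IsBilin K m) {v : ι → M} (hv : LinearIndependent K v)
    (hcard : Fintype.card ι = finrank K M)
    (htable : ∀ i j, mul (v i) (v j) = ∑ k, m (Pi.single i 1) (Pi.single j 1) k • v k) :
    JIso K mul m := by
  let B := basisOfLinearIndependentOfCardEqFinrank hv hcard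
  have hB : ⇑B = v := coe_basisOfLinearIndependentOfCardEqFinrank hv hcard
  refine ⟨B.equivFun, fun x y => LinearMap.congr_fun₂ (?_ : hmul.toLinearMap₂.compr₂
    B.equivFun.toLinearMap = hm.toLinearMap₂.compl₁₂ B.equivFun.toLinearMap
      B.equivFun.toLinearMap) x y⟩
  refine B.ext fun i => B.ext fun j => ?_
  have hrow := htable i j
  rw [← hB, ← B.equivFun_symm_apply] at hrow
  simp only [LinearMap.compr₂_apply, LinearMap.compl₁₂_apply, IsBilin.toLinearMap₂_apply,
    LinearEquiv.coe_coe, hrow, LinearEquiv.apply_symm_apply, Basis.equivFun_apply,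
    Basis.repr_self, Finsupp.single_eq_pi_single]

end Isomorphism

section LinearAlgebra

variable {K : Type*} [Field K] {M : Type*} [AddCommGroup M] [Module K M]

lemma exists_smul_add_of_mem_span_singleton_sup {a x : M} {p : Submodule K M}
    (hx : x ∈ (K ∙ a) ⊔ p) : ∃ α : K, ∃ u ∈ p, x = α • a + u := by
  obtain ⟨y, hy, u, hu, rfl⟩ := mem_sup.1 hx
  obtain ⟨α, rfl⟩ := mem_span_singleton.1 hy
  exact ⟨α, u, hu, rfl⟩

lemma notMem_span_of_forall_apply_eq_zero (f : Module.Dual K M) {s : Set M} {x : M}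
    (hs : ∀ y ∈ s, f y = 0) (hx : f x ≠ 0) : x ∉ span K s :=
  fun h => hx (span_le (p := LinearMap.ker f) |>.2 hs h)

lemma linearIndependent_pair_of_notMem_span {x y : M} (hx : x ≠ 0) (hy : y ∉ K ∙ x) :
    LinearIndependent K ![x, y] :=
  (LinearIndependent.pair_iff' hx).2 fun t ht => hy (ht ▸ smul_mem _ t (mem_span_singleton_self x))

lemma linearIndependent_fin3 {a b c : M} (hbc : LinearIndependent K ![b, c])
    (ha : a ∉ span K {b, c}) : LinearIndependent K ![a, b, c] := by
  refine linearIndependent_finCons.2 ⟨hbc, ?_⟩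
  simpa [Matrix.range_cons_cons_empty, Set.pair_comm] using ha

lemma exists_bilinForm_mul_eq_smul {mul : M → M → M} (hmul : IsBilin K mul) {c : M}
    (hc : c ≠ 0) (h : ∀ x y, mul x y ∈ K ∙ c) :
    ∃ θ : LinearMap.BilinForm K M, ∀ x y, mul x y = θ x y • c := by
  obtain ⟨φ, hφ⟩ := Module.Projective.exists_dual_eq_one K hc
  refine ⟨hmul.toLinearMap₂.compr₂ φ, fun x y => ?_⟩
  obtain ⟨t, ht⟩ := mem_span_singleton.1 (h x y)
  simp [← ht, hφ]

lemma LinearMap.BilinForm.IsSymm.exists_apply_self_eq_one [IsAlgClosed K] (h2 : (2 : K) ≠ 0)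
    {θ : LinearMap.BilinForm K M} (hθ : θ.IsSymm) (hne : θ ≠ 0) : ∃ a, θ a a = 1 := by
  have : Invertible (2 : K) := invertibleOfNonzero h2
  obtain ⟨x, hx⟩ := LinearMap.BilinForm.exists_bilinForm_self_ne_zero hne
    (LinearMap.BilinForm.isSymm_iff.1 hθ)
  obtain ⟨s, hs⟩ := IsAlgClosed.exists_pow_nat_eq (θ x x)⁻¹ two_pos
  exact ⟨s • x, by simp [← mul_assoc, ← sq, hs, hx]⟩

end LinearAlgebra

section Models

variable (K : Type*) [Field K]

lemma isJordanAlg_m31 : IsJordanAlg K (m31 K) := by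
  refine ⟨⟨?_, ?_, ?_, ?_⟩, ?_, ?_⟩ <;> intros <;> simp [m31]

lemma isJordanAlg_m32 : IsJordanAlg K (m32 K) := by
  refine ⟨⟨?_, ?_, ?_, ?_⟩, ?_, ?_⟩ <;> intros <;> funext i <;> fin_cases i <;>
    simp [m32] <;> ring

lemma isJordanAlg_m33 : IsJordanAlg K (m33 K) := by
  refine ⟨⟨?_, ?_, ?_, ?_⟩, ?_, ?_⟩ <;> intros <;> funext i <;> fin_cases i <;>
    simp [m33] <;> ring

lemma isJordanAlg_m34 : IsJordanAlg K (m34 K) := by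
  refine ⟨⟨?_, ?_, ?_, ?_⟩, ?_, ?_⟩ <;> intros <;> funext i <;> fin_cases i <;>
    simp [m34] <;> ring

lemma lcs_succ_m31 (n : ℕ) : lcs K (m31 K) (n + 1) = ⊥ :=
  lcs_succ_eq_bot_iff.2 fun _ _ _ => rfl

lemma lcs_one_m32_le :
    lcs K (m32 K) 1 ≤ LinearMap.ker (LinearMap.proj 0) ⊓ LinearMap.ker (LinearMap.proj 2) :=
  lcs_succ_le_of fun x _ y => by simp [m32]

lemma lcs_two_m32 : lcs K (m32 K) 2 = ⊥ := by
  refine lcs_succ_eq_bot_iff.2 fun x hx y => ?_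
  have hx0 : x 0 = 0 := by simpa using (mem_inf.1 (lcs_one_m32_le K hx)).1
  funext i
  fin_cases i <;> simp [m32, hx0]

lemma lcs_one_m32_ne_bot : lcs K (m32 K) 1 ≠ ⊥ := fun h =>
  by simpa [m32] using congrFun (lcs_succ_eq_bot_iff.1 h ![1, 0, 0] mem_top ![1, 0, 0]) 1

lemma exists_annihilator_notMem_lcs_one_m32 :
    ∃ x, (∀ y, m32 K x y = 0) ∧ x ∉ lcs K (m32 K) 1 := by
  refine ⟨![0, 0, 1], fun y => ?_, fun h => ?_⟩
  · funext i
    fin_cases i <;> simp [m32]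
  · simpa using (mem_inf.1 (lcs_one_m32_le K h)).2

lemma lcs_one_m33_le :
    lcs K (m33 K) 1 ≤ LinearMap.ker (LinearMap.proj 0) ⊓ LinearMap.ker (LinearMap.proj 1) :=
  lcs_succ_le_of fun x _ y => by simp [m33]

lemma lcs_two_m33 : lcs K (m33 K) 2 = ⊥ := by
  refine lcs_succ_eq_bot_iff.2 fun x hx y => ?_
  obtain ⟨hx0, hx1⟩ := mem_inf.1 (lcs_one_m33_le K hx)
  simp only [LinearMap.mem_ker, LinearMap.proj_apply] at hx0 hx1
  funext i
  fin_cases i <;> simp [m33, hx0, hx1]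

lemma lcs_one_m33_ne_bot : lcs K (m33 K) 1 ≠ ⊥ := fun h =>
  by simpa [m33] using congrFun (lcs_succ_eq_bot_iff.1 h ![1, 0, 0] mem_top ![1, 0, 0]) 2

lemma mem_lcs_one_m33_of_annihilates {z : Fin 3 → K} (hz : ∀ y, m33 K z y = 0) :
    z ∈ lcs K (m33 K) 1 := by
  have hz0 : z 0 = 0 := by simpa [m33] using congrFun (hz ![1, 0, 0]) 2
  have hz1 : z 1 = 0 := by simpa [m33] using congrFun (hz ![0, 1, 0]) 2
  have hz2 : z = m33 K ![z 2, 0, 0] ![1, 0, 0] := by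
    funext i
    fin_cases i <;> simp [m33, hz0, hz1]
  exact hz2 ▸ mul_mem_lcs_succ mem_top _

lemma lcs_one_m34_le : lcs K (m34 K) 1 ≤ LinearMap.ker (LinearMap.proj 0) :=
  lcs_succ_le_of fun x _ y => by simp [m34]

lemma lcs_two_m34_le :
    lcs K (m34 K) 2 ≤ LinearMap.ker (LinearMap.proj 0) ⊓ LinearMap.ker (LinearMap.proj 1) := by
  refine lcs_succ_le_of fun x hx y => ?_
  have hx0 : x 0 = 0 := by simpa using lcs_one_m34_le K hx
  simp [m34, hx0]

lemma lcs_three_m34 : lcs K (m34 K) 3 = ⊥ := by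
  refine lcs_succ_eq_bot_iff.2 fun x hx y => ?_
  obtain ⟨hx0, hx1⟩ := mem_inf.1 (lcs_two_m34_le K hx)
  simp only [LinearMap.mem_ker, LinearMap.proj_apply] at hx0 hx1
  funext i
  fin_cases i <;> simp [m34, hx0, hx1]

lemma lcs_two_m34_ne_bot : lcs K (m34 K) 2 ≠ ⊥ := fun h => by
  have h1 : m34 K ![1, 0, 0] ![1, 0, 0] ∈ lcs K (m34 K) 1 := mul_mem_lcs_succ mem_top _
  simpa [m34] using congrFun (lcs_succ_eq_bot_iff.1 h _ h1 ![1, 0, 0]) 2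

end Models

section Classification

variable {K : Type*} [Field K] {M : Type*} [AddCommGroup M] [Module K M] {mul : M → M → M}

lemma jIso_m31_of_lcs_one_eq_bot (h3 : finrank K M = 3) (h : lcs K mul 1 = ⊥) :
    JIso K mul (m31 K) := by
  have := Module.finite_of_finrank_eq_succ h3
  exact ⟨LinearEquiv.ofFinrankEq M (Fin 3 → K) (by simp [h3]), fun x y => by
    simp [lcs_succ_eq_bot_iff.1 h x mem_top y, m31]⟩

section SquareOnALine

variable {θ : LinearMap.BilinForm K M} {c : M} (hmul : IsBilin K mul) (h3 : finrank K M = 3)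
  (hθ : ∀ x y, mul x y = θ x y • c) (hsymm : θ.IsSymm) (hc : c ≠ 0) (hθc : ∀ y, θ c y = 0)
include hmul h3 hθ hsymm hc hθc

lemma jIso_m33_of_orthonormal {a b : M} (haa : θ a a = 1) (hbb : θ b b = 1) (hab : θ a b = 0) :
    JIso K mul (m33 K) := by
  have hba : θ b a = 0 := hsymm.eq b a ▸ hab
  have hθc' : ∀ x, θ x c = 0 := fun x => hsymm.eq x c ▸ hθc x
  have hbc : b ∉ K ∙ c := notMem_span_of_forall_apply_eq_zero (θ b) (by simp [hθc']) (by simp [hbb])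
  have habc : a ∉ span K {b, c} :=
    notMem_span_of_forall_apply_eq_zero (θ a) (by simp [hab, hθc']) (by simp [haa])
  refine jIso_of_linearIndependent hmul (isJordanAlg_m33 K).1
    (linearIndependent_fin3 (LinearIndependent.pair_symm_iff.1
      (linearIndependent_pair_of_notMem_span hc hbc)) habc) (by simp [h3]) ?_
  intro i j
  fin_cases i <;> fin_cases j <;> simp [hθ, m33, Fin.sum_univ_three, haa, hbb, hab, hba, hθc, hθc']

lemma jIso_m32_of_radical {a d : M} (haa : θ a a = 1) (hθd : ∀ y, θ d y = 0) (hdc : d ∉ K ∙ c) :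
    JIso K mul (m32 K) := by
  have hθc' : ∀ x, θ x c = 0 := fun x => hsymm.eq x c ▸ hθc x
  have hθd' : ∀ x, θ x d = 0 := fun x => hsymm.eq x d ▸ hθd x
  have hacd : a ∉ span K {c, d} :=
    notMem_span_of_forall_apply_eq_zero (θ a) (by simp [hθc', hθd']) (by simp [haa])
  refine jIso_of_linearIndependent hmul (isJordanAlg_m32 K).1
    (linearIndependent_fin3 (linearIndependent_pair_of_notMem_span hc hdc) hacd)
    (by simp [h3]) ?_
  intro i j
  fin_cases i <;> fin_cases j <;> simp [hθ, m32, Fin.sum_univ_three, haa, hθc, hθc', hθd, hθd']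

lemma jIso_m32_or_m33_of_mul_eq_smul [IsAlgClosed K] (h2 : (2 : K) ≠ 0) (hne : θ ≠ 0) :
    JIso K mul (m32 K) ∨ JIso K mul (m33 K) := by
  obtain ⟨a, haa⟩ := hsymm.exists_apply_self_eq_one h2 hne
  set W := LinearMap.ker (θ a)
  have hproj : ∀ y, y - θ a y • a ∈ W := fun y => by simp [W, haa]
  by_cases hθW : θ.restrict W = 0
  · have hrad : ∀ d ∈ W, ∀ y, θ d y = 0 := fun d hd y => by
      have hdy : θ d (y - θ a y • a) = 0 := LinearMap.congr_fun₂ hθW ⟨d, hd⟩ ⟨_, hproj y⟩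
      have hda : θ d a = 0 := (hsymm.eq d a).trans hd
      simpa [hda] using hdy
    have hcW : K ∙ c < W := by
      have := Module.finite_of_finrank_eq_succ h3
      have hθa : θ a ≠ 0 := fun h => by simp [h] at haa
      have hdimW : finrank K W + 1 = 3 := h3 ▸ Module.Dual.finrank_ker_add_one_of_ne_zero hθa
      refine lt_of_le_of_finrank_lt_finrank ((span_singleton_le_iff_mem c W).2 ?_) ?_
      · simpa [W] using (hsymm.eq a c).trans (hθc a)
      · rw [finrank_span_singleton hc]
        omega
    obtain ⟨d, hdW, hdc⟩ := SetLike.exists_of_lt hcW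
    exact .inl (jIso_m32_of_radical hmul h3 hθ hsymm hc hθc haa (hrad d hdW) hdc)
  · obtain ⟨⟨b, hbW⟩, hbb⟩ := (hsymm.restrict W).exists_apply_self_eq_one h2 hθW
    exact .inr (jIso_m33_of_orthonormal hmul h3 hθ hsymm hc hθc haa hbb hbW)

end SquareOnALine

lemma jIso_m32_or_m33_of_finrank_lcs_one_eq_one [IsAlgClosed K] (h2 : (2 : K) ≠ 0)
    (hmul : IsBilin K mul) (hcomm : ∀ x y, mul x y = mul y x) (hN : IsNilpotentAlg K mul)
    (h3 : finrank K M = 3) (h1 : finrank K (lcs K mul 1) = 1) :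
    JIso K mul (m32 K) ∨ JIso K mul (m33 K) := by
  have := Module.finite_of_finrank_eq_succ h3
  have hne : lcs K mul 1 ≠ ⊥ := by rw [Ne, ← finrank_eq_zero]; omega
  obtain ⟨c, hc1, hc⟩ := exists_mem_ne_zero_of_ne_bot hne
  have hspan : lcs K mul 1 = K ∙ c := eq_span_singleton_of_mem_of_finrank_eq_one h1 hc1 hc
  have h21 : finrank K (lcs K mul 2) < 1 := h1 ▸ finrank_lt_finrank_of_lt (lcs_succ_lt hN hne)
  have h2bot : lcs K mul 2 = ⊥ := finrank_eq_zero.1 (Nat.lt_one_iff.1 h21)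
  obtain ⟨θ, hθ⟩ := exists_bilinForm_mul_eq_smul hmul hc fun x y =>
    hspan ▸ mul_mem_lcs_succ mem_top y
  have hsymm : θ.IsSymm := ⟨fun x y => smul_left_injective K hc <| by
    simp only [← hθ, hcomm x y]⟩
  have hθc : ∀ y, θ c y = 0 := fun y => smul_left_injective K hc <| by
    simp only [← hθ, zero_smul]
    exact lcs_succ_eq_bot_iff.1 h2bot c hc1 y
  refine jIso_m32_or_m33_of_mul_eq_smul hmul h3 hθ hsymm hc hθc h2 fun hθ0 => hne ?_
  exact lcs_succ_eq_bot_iff.2 fun x _ y => by simp [hθ, hθ0]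

lemma mul_sq_sq_eq_zero (hJ : IsJordanAlg K mul) (hz : ∀ w ∈ lcs K mul 2, ∀ y, mul w y = 0)
    (a : M) : mul (mul a a) (mul a a) = 0 := by
  rw [hJ.2.2 a a, hJ.2.1 a, hz _ (mul_mem_lcs_succ (mul_mem_lcs_succ mem_top a) a) a]

section GeneratedByOneElement

variable {a : M} (ha : ∀ x, ∃ α : K, ∃ u ∈ lcs K mul 1, x = α • a + u)
include ha

lemma lcs_one_le_span_sq_sup_lcs_two (hmul : IsBilin K mul)
    (hcomm : ∀ x y, mul x y = mul y x) : lcs K mul 1 ≤ (K ∙ mul a a) ⊔ lcs K mul 2 := by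
  refine lcs_succ_le_of fun x _ y => ?_
  obtain ⟨α, u, hu, rfl⟩ := ha x
  obtain ⟨β, v, hv, rfl⟩ := ha y
  have hav : mul a v ∈ lcs K mul 2 := hcomm v a ▸ mul_mem_lcs_succ hv a
  have huy : mul u (β • a + v) ∈ lcs K mul 2 := mul_mem_lcs_succ hu _
  rw [show mul (α • a + u) (β • a + v) = (α * β) • mul a a + (α • mul a v + mul u (β • a + v)) by
    simp only [hmul.1, hmul.2.1, hmul.2.2.1, hmul.2.2.2]
    module]
  exact add_mem (mem_sup_left (smul_mem _ _ (mem_span_singleton_self _)))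
    (mem_sup_right (add_mem (smul_mem _ _ hav) huy))

lemma lcs_two_le_span_mul_mul_sq (hJ : IsJordanAlg K mul)
    (hz : ∀ w ∈ lcs K mul 2, ∀ y, mul w y = 0) : lcs K mul 2 ≤ K ∙ mul a (mul a a) := by
  have hbb := mul_sq_sq_eq_zero hJ hz a
  obtain ⟨hmul, hcomm, -⟩ := hJ
  have hJ2 := lcs_one_le_span_sq_sup_lcs_two ha hmul hcomm
  refine lcs_succ_le_of fun u hu y => ?_
  obtain ⟨s, w, hw, rfl⟩ := exists_smul_add_of_mem_span_singleton_sup (hJ2 hu)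
  obtain ⟨β, v, hv, rfl⟩ := ha y
  obtain ⟨t, w', hw', rfl⟩ := exists_smul_add_of_mem_span_singleton_sup (hJ2 hv)
  rw [show mul (s • mul a a + w) (β • a + (t • mul a a + w')) = (s * β) • mul a (mul a a) by
    simp only [hmul.1, hmul.2.1, hmul.2.2.1, hmul.2.2.2, hz w hw, hbb, hcomm (mul a a) w',
      hz w' hw', hcomm (mul a a) a]
    module]
  exact smul_mem _ _ (mem_span_singleton_self _)

end GeneratedByOneElement

lemma jIso_m34_of_finrank_lcs_one_eq_two (hJ : IsJordanAlg K mul) (hN : IsNilpotentAlg K mul)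
    (h3 : finrank K M = 3) (h1 : finrank K (lcs K mul 1) = 2) : JIso K mul (m34 K) := by
  have := Module.finite_of_finrank_eq_succ h3
  have hz : ∀ w ∈ lcs K mul 2, ∀ y, mul w y = 0 :=
    lcs_succ_eq_bot_iff.1 <| finrank_eq_zero.1 <| by simpa [h3] using finrank_lcs_le hN 3
  obtain ⟨a, -, ha⟩ := SetLike.exists_of_lt (lt_top_of_finrank_lt_finrank (s := lcs K mul 1)
    (by omega))
  have hsup : lcs K mul 1 ⊔ K ∙ a = ⊤ :=
    eq_top_of_finrank_eq (by rw [finrank_sup_span_singleton ha]; omega)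
  have hdec : ∀ x, ∃ α : K, ∃ u ∈ lcs K mul 1, x = α • a + u := fun x =>
    exists_smul_add_of_mem_span_singleton_sup (sup_comm (K ∙ a) _ ▸ hsup ▸ mem_top)
  set b := mul a a with hb
  set c := mul a b with hc
  have hb1 : b ∈ lcs K mul 1 := mul_mem_lcs_succ mem_top a
  have hc2 : c ∈ lcs K mul 2 := by
    rw [hc, hJ.2.1]
    exact mul_mem_lcs_succ hb1 a
  have hle : lcs K mul 1 ≤ span K {b, c} := by
    rw [span_insert]
    exact (lcs_one_le_span_sq_sup_lcs_two hdec hJ.1 hJ.2.1).trans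
      (sup_le_sup_left (lcs_two_le_span_mul_mul_sq hdec hJ hz) _)
  have hbc : LinearIndependent K ![b, c] := by
    rw [linearIndependent_iff_card_le_finrank_span, Matrix.range_cons_cons_empty]
    simpa [h1, Set.finrank] using finrank_mono hle
  have habc : a ∉ span K {b, c} := fun h =>
    ha (span_le.2 (by simp [Set.insert_subset_iff, hb1, lcs_succ_le 1 hc2]) h)
  refine jIso_of_linearIndependent hJ.1 (isJordanAlg_m34 K).1 (linearIndependent_fin3 hbc habc)
    (by simp [h3]) ?_
  have hbb : mul b b = 0 := mul_sq_sq_eq_zero hJ hz a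
  have hca : ∀ y, mul c y = 0 := hz c hc2
  have hac : ∀ y, mul y c = 0 := fun y => (hJ.2.1 y c).trans (hca y)
  have hba : mul b a = c := hJ.2.1 b a
  intro i j
  fin_cases i <;> fin_cases j <;> simp [m34, Fin.sum_univ_three, ← hb, ← hc, hbb, hca, hac, hba]

theorem jIso_of_finrank_eq_three [IsAlgClosed K] (h2 : (2 : K) ≠ 0) (h3 : finrank K M = 3)
    (hJ : IsJordanAlg K mul) (hN : IsNilpotentAlg K mul) :
    JIso K mul (m31 K) ∨ JIso K mul (m32 K) ∨ JIso K mul (m33 K) ∨ JIso K mul (m34 K) := by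
  have := Module.finite_of_finrank_eq_succ h3
  have hle : finrank K (lcs K mul 1) ≤ 2 := by simpa [h3] using finrank_lcs_le hN 1
  interval_cases h1 : finrank K (lcs K mul 1)
  · exact .inl (jIso_m31_of_lcs_one_eq_bot h3 (finrank_eq_zero.1 h1))
  · exact .inr ((jIso_m32_or_m33_of_finrank_lcs_one_eq_one h2 hJ.1 hJ.2.1 hN h3 h1).imp_right .inl)
  · exact .inr (.inr (.inr (jIso_m34_of_finrank_lcs_one_eq_two hJ hN h3 h1)))

end Classification

/-- over an algebraically closed field of characteristic ≠ 2 there are,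
up to isomorphism, exactly 4 nilpotent Jordan algebras of dimension 3. -/
theorem stmt13 (K : Type*) [Field K] [IsAlgClosed K] (h2 : (2 : K) ≠ 0) :
    (IsJordanAlg K (m31 K) ∧ IsNilpotentAlg K (m31 K)) ∧
    (IsJordanAlg K (m32 K) ∧ IsNilpotentAlg K (m32 K)) ∧
    (IsJordanAlg K (m33 K) ∧ IsNilpotentAlg K (m33 K)) ∧
    (IsJordanAlg K (m34 K) ∧ IsNilpotentAlg K (m34 K)) ∧
    (¬ JIso K (m31 K) (m32 K)) ∧ (¬ JIso K (m31 K) (m33 K)) ∧ (¬ JIso K (m31 K) (m34 K)) ∧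
    (¬ JIso K (m32 K) (m33 K)) ∧ (¬ JIso K (m32 K) (m34 K)) ∧ (¬ JIso K (m33 K) (m34 K)) ∧
    ∀ (M : Type*) [AddCommGroup M] [Module K M] (mul : M → M → M),
      Module.finrank K M = 3 → IsJordanAlg K mul → IsNilpotentAlg K mul →
      (JIso K mul (m31 K) ∨ JIso K mul (m32 K) ∨ JIso K mul (m33 K) ∨ JIso K mul (m34 K)) :=
  ⟨⟨isJordanAlg_m31 K, 1, lcs_succ_m31 K 0⟩, ⟨isJordanAlg_m32 K, 2, lcs_two_m32 K⟩,
    ⟨isJordanAlg_m33 K, 2, lcs_two_m33 K⟩, ⟨isJordanAlg_m34 K, 3, lcs_three_m34 K⟩,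
    not_jIso_of_lcs_eq_bot (lcs_succ_m31 K 0) (lcs_one_m32_ne_bot K),
    not_jIso_of_lcs_eq_bot (lcs_succ_m31 K 0) (lcs_one_m33_ne_bot K),
    not_jIso_of_lcs_eq_bot (lcs_succ_m31 K 1) (lcs_two_m34_ne_bot K),
    not_jIso_of_annihilator_notMem_lcs_one (exists_annihilator_notMem_lcs_one_m32 K)
      fun _ => mem_lcs_one_m33_of_annihilates K,
    not_jIso_of_lcs_eq_bot (lcs_two_m32 K) (lcs_two_m34_ne_bot K),
    not_jIso_of_lcs_eq_bot (lcs_two_m33 K) (lcs_two_m34_ne_bot K),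
    fun _ _ _ _ h3 hJ hN => jIso_of_finrank_eq_three h2 h3 hJ hN⟩
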